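/- arXiv:1410.8199 — 2 statements merged into one kernel-verified Lean document; each statement's English description precedes it below -/
import Mathlib

section
/- Let μ be a Borel probability measure on ℝ² ∖ {0}. Then there exists a Borel set B ⊆ ℝ² ∖ {0} and a matrix g ∈ {L(1), L(−1), U(1), U(−1)} ⊆ SL₂(ℤ), where L(r) = [[1,0],[r,1]] and U(r) = [[1,r],[0,1]], such that |μ(g⁻¹·B) − μ(B)| ≥ 1/4, where SL₂ acts on ℝ² by matrix multiplication. -/
open MeasureTheory Matrix

/-- Auxiliary: if the preimage set `P` is contained in `B` and the difference has
measure at least `1/4`, we get the displacement bound. -/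
private lemma shalom_aux (μ : Measure (Fin 2 → ℝ)) [IsProbabilityMeasure μ]
    (B P : Set (Fin 2 → ℝ)) (g : Matrix (Fin 2) (Fin 2) ℝ)
    (hP : (fun v => g.mulVec v) ⁻¹' B = P) (mP : MeasurableSet P) (hsub : P ⊆ B)
    (hr : 1/4 ≤ (μ (B \ P)).toReal) :
    1/4 ≤ |(μ ((fun v => g.mulVec v) ⁻¹' B)).toReal - (μ B).toReal| := by
  rw [hP]
  have hdiff : μ (B \ P) = μ B - μ P :=
    measure_diff hsub mP.nullMeasurableSet (measure_ne_top μ P)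
  have htole : (μ P).toReal ≤ (μ B).toReal :=
    ENNReal.toReal_mono (measure_ne_top μ B) (measure_mono hsub)
  have : (μ (B \ P)).toReal = (μ B).toReal - (μ P).toReal := by
    rw [hdiff, ENNReal.toReal_sub_of_le (measure_mono hsub) (measure_ne_top μ B)]
  rw [abs_sub_comm, abs_of_nonneg (by linarith)]
  linarith

/-- Shalom's lemma: for any Borel probability measure `μ` on `ℝ² ∖ {0}`
(modelled as a measure on `ℝ²` giving zero mass to `0`), there is a Borel set
`B` avoiding `0` and an elementary matrix
`g ∈ {L(±1), U(±1)} ⊆ SL₂(ℤ)` with `|μ(g⁻¹·B) − μ(B)| ≥ 1/4`. -/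
theorem shalom_lemma (μ : Measure (Fin 2 → ℝ)) [IsProbabilityMeasure μ]
    (hμ0 : μ {(0 : Fin 2 → ℝ)} = 0) :
    ∃ B : Set (Fin 2 → ℝ), MeasurableSet B ∧ (0 : Fin 2 → ℝ) ∉ B ∧
      ∃ g ∈ ({!![1, 0; 1, 1], !![1, 0; -1, 1], !![1, 1; 0, 1], !![1, -1; 0, 1]} :
          Set (Matrix (Fin 2) (Fin 2) ℝ)),
        1/4 ≤ |(μ ((fun v => g.mulVec v) ⁻¹' B)).toReal - (μ B).toReal| := by
  classical
  set B1 : Set (Fin 2 → ℝ) := {v | v 0 ≠ 0 ∧ v 0 * v 1 ≤ 0} with hB1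
  set B2 : Set (Fin 2 → ℝ) := {v | v 0 ≠ 0 ∧ 0 < v 0 * v 1} with hB2
  set B3 : Set (Fin 2 → ℝ) := {v | v 1 ≠ 0 ∧ v 0 * v 1 < 0} with hB3
  set B4 : Set (Fin 2 → ℝ) := {v | (v 0 ≠ 0 ∨ v 1 ≠ 0) ∧ 0 ≤ v 0 * v 1} with hB4
  set P1 : Set (Fin 2 → ℝ) := {v | v 0 ≠ 0 ∧ v 0 * (v 0 + v 1) ≤ 0} with hP1
  set P2 : Set (Fin 2 → ℝ) := {v | v 0 ≠ 0 ∧ 0 < v 0 * (v 1 - v 0)} with hP2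
  set P3 : Set (Fin 2 → ℝ) := {v | v 1 ≠ 0 ∧ (v 0 + v 1) * v 1 < 0} with hP3
  set P4 : Set (Fin 2 → ℝ) := {v | (v 0 - v 1 ≠ 0 ∨ v 1 ≠ 0) ∧ 0 ≤ (v 0 - v 1) * v 1}
    with hP4
  have m0 : Measurable fun v : Fin 2 → ℝ => v 0 := measurable_pi_apply 0
  have m1 : Measurable fun v : Fin 2 → ℝ => v 1 := measurable_pi_apply 1
  have mne0 : MeasurableSet {v : Fin 2 → ℝ | v 0 ≠ 0} :=
    (m0 (measurableSet_singleton 0)).compl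
  have mne1 : MeasurableSet {v : Fin 2 → ℝ | v 1 ≠ 0} :=
    (m1 (measurableSet_singleton 0)).compl
  have mne01 : MeasurableSet {v : Fin 2 → ℝ | v 0 - v 1 ≠ 0} :=
    ((m0.sub m1) (measurableSet_singleton 0)).compl
  have mB1 : MeasurableSet B1 :=
    mne0.inter (measurableSet_le (m0.mul m1) measurable_const)
  have mB2 : MeasurableSet B2 :=
    mne0.inter (measurableSet_lt measurable_const (m0.mul m1))
  have mB3 : MeasurableSet B3 :=
    mne1.inter (measurableSet_lt (m0.mul m1) measurable_const)
  have mB4 : MeasurableSet B4 :=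
    (mne0.union mne1).inter (measurableSet_le measurable_const (m0.mul m1))
  have mP1 : MeasurableSet P1 :=
    mne0.inter (measurableSet_le (m0.mul (m0.add m1)) measurable_const)
  have mP2 : MeasurableSet P2 :=
    mne0.inter (measurableSet_lt measurable_const (m0.mul (m1.sub m0)))
  have mP3 : MeasurableSet P3 :=
    mne1.inter (measurableSet_lt ((m0.add m1).mul m1) measurable_const)
  have mP4 : MeasurableSet P4 :=
    (mne01.union mne1).inter (measurableSet_le measurable_const ((m0.sub m1).mul m1))
  -- preimage identification
  have hg1 : ∀ v : Fin 2 → ℝ, (!![1, 0; 1, 1] : Matrix (Fin 2) (Fin 2) ℝ).mulVec v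
      = ![v 0, v 0 + v 1] := by
    intro v; funext i; fin_cases i <;> simp [Matrix.mulVec, dotProduct, Fin.sum_univ_two]
  have hg2 : ∀ v : Fin 2 → ℝ, (!![1, 0; -1, 1] : Matrix (Fin 2) (Fin 2) ℝ).mulVec v
      = ![v 0, v 1 - v 0] := by
    intro v; funext i; fin_cases i <;>
      simp [Matrix.mulVec, dotProduct, Fin.sum_univ_two] <;> ring
  have hg3 : ∀ v : Fin 2 → ℝ, (!![1, 1; 0, 1] : Matrix (Fin 2) (Fin 2) ℝ).mulVec v
      = ![v 0 + v 1, v 1] := by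
    intro v; funext i; fin_cases i <;> simp [Matrix.mulVec, dotProduct, Fin.sum_univ_two]
  have hg4 : ∀ v : Fin 2 → ℝ, (!![1, -1; 0, 1] : Matrix (Fin 2) (Fin 2) ℝ).mulVec v
      = ![v 0 - v 1, v 1] := by
    intro v; funext i; fin_cases i <;>
      simp [Matrix.mulVec, dotProduct, Fin.sum_univ_two] <;> ring
  have hpre1 : (fun v => (!![1, 0; 1, 1] : Matrix (Fin 2) (Fin 2) ℝ).mulVec v) ⁻¹' B1 = P1 := by
    ext v
    rw [Set.mem_preimage, hg1 v]
    simp only [hB1, hP1, Set.mem_setOf_eq, Matrix.cons_val_zero, Matrix.cons_val_one,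
      Matrix.head_cons]
  have hpre2 : (fun v => (!![1, 0; -1, 1] : Matrix (Fin 2) (Fin 2) ℝ).mulVec v) ⁻¹' B2 = P2 := by
    ext v
    rw [Set.mem_preimage, hg2 v]
    simp only [hB2, hP2, Set.mem_setOf_eq, Matrix.cons_val_zero, Matrix.cons_val_one,
      Matrix.head_cons]
  have hpre3 : (fun v => (!![1, 1; 0, 1] : Matrix (Fin 2) (Fin 2) ℝ).mulVec v) ⁻¹' B3 = P3 := by
    ext v
    rw [Set.mem_preimage, hg3 v]
    simp only [hB3, hP3, Set.mem_setOf_eq, Matrix.cons_val_zero, Matrix.cons_val_one,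
      Matrix.head_cons]
  have hpre4 : (fun v => (!![1, -1; 0, 1] : Matrix (Fin 2) (Fin 2) ℝ).mulVec v) ⁻¹' B4 = P4 := by
    ext v
    rw [Set.mem_preimage, hg4 v]
    simp only [hB4, hP4, Set.mem_setOf_eq, Matrix.cons_val_zero, Matrix.cons_val_one,
      Matrix.head_cons]
  -- nestedness
  have hs1 : P1 ⊆ B1 := by
    rintro v ⟨h0, h⟩
    exact ⟨h0, by nlinarith [sq_nonneg (v 0)]⟩
  have hs2 : P2 ⊆ B2 := by
    rintro v ⟨h0, h⟩
    exact ⟨h0, by nlinarith [sq_nonneg (v 0), mul_self_pos.mpr h0]⟩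
  have hs3 : P3 ⊆ B3 := by
    rintro v ⟨h0, h⟩
    exact ⟨h0, by nlinarith [mul_self_pos.mpr h0]⟩
  have hs4 : P4 ⊆ B4 := by
    rintro v ⟨h0, h⟩
    refine ⟨?_, by nlinarith [sq_nonneg (v 1)]⟩
    rcases h0 with h0 | h0
    · by_cases h1 : v 1 = 0
      · left; intro hx; apply h0; rw [hx, h1]; ring
      · right; exact h1
    · right; exact h0
  -- covering
  have cover : ∀ v : Fin 2 → ℝ, v ≠ 0 →
      v ∈ (B1 \ P1) ∪ ((B2 \ P2) ∪ ((B3 \ P3) ∪ (B4 \ P4))) := by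
    intro v hv
    have hv' : v 0 ≠ 0 ∨ v 1 ≠ 0 := by
      by_contra h
      push_neg at h
      exact hv (funext fun i => by fin_cases i <;> simp [h.1, h.2])
    rcases lt_trichotomy (v 0 * v 1) 0 with h | h | h
    · -- negative slope
      have h0 : v 0 ≠ 0 := fun hx => by simp [hx] at h
      have h1 : v 1 ≠ 0 := fun hx => by simp [hx] at h
      by_cases hc : v 0 * (v 0 + v 1) ≤ 0
      · -- slope ≤ -1 : in E3
        refine Or.inr (Or.inr (Or.inl ⟨⟨h1, h⟩, ?_⟩))
        intro hP
        rcases hP with ⟨-, hlt⟩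
        nlinarith [sq_nonneg (v 0 + v 1)]
      · -- slope in (-1, 0] : in E1
        push_neg at hc
        exact Or.inl ⟨⟨h0, le_of_lt h⟩, fun hP => absurd hP.2 (not_le.mpr hc)⟩
    · -- one coordinate zero
      rcases mul_eq_zero.mp h with h0 | h1
      · -- v 0 = 0, so v 1 ≠ 0 : in E4
        have h1 : v 1 ≠ 0 := by rcases hv' with h' | h'; exact absurd h0 h'; exact h'
        refine Or.inr (Or.inr (Or.inr ⟨⟨Or.inr h1, le_of_eq h.symm⟩, ?_⟩))
        rintro ⟨-, hle⟩
        nlinarith [mul_self_pos.mpr h1, h0]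
      · -- v 1 = 0, so v 0 ≠ 0 : in E1
        have h0 : v 0 ≠ 0 := by
          rcases hv' with h' | h'
          · exact h'
          · exact absurd h1 h'
        refine Or.inl ⟨⟨h0, le_of_eq h⟩, ?_⟩
        rintro ⟨-, hle⟩
        nlinarith [mul_self_pos.mpr h0]
    · -- positive slope
      have h0 : v 0 ≠ 0 := fun hx => by simp [hx] at h
      have h1 : v 1 ≠ 0 := fun hx => by simp [hx] at h
      by_cases hc : 0 < v 0 * (v 1 - v 0)
      · -- slope > 1 : in E4
        refine Or.inr (Or.inr (Or.inr ⟨⟨Or.inr h1, le_of_lt h⟩, ?_⟩))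
        rintro ⟨-, hle⟩
        nlinarith [mul_pos hc h, mul_self_pos.mpr h0]
      · -- slope in (0, 1] : in E2
        push_neg at hc
        exact Or.inr (Or.inl ⟨⟨h0, h⟩, fun hP => absurd hP.2 (not_lt.mpr hc)⟩)
  -- total mass inequality
  have key : (1 : ENNReal) ≤ μ (B1 \ P1) + (μ (B2 \ P2) + (μ (B3 \ P3) + μ (B4 \ P4))) := by
    have hcov : (Set.univ : Set (Fin 2 → ℝ)) ⊆
        {0} ∪ ((B1 \ P1) ∪ ((B2 \ P2) ∪ ((B3 \ P3) ∪ (B4 \ P4)))) := by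
      intro v _
      by_cases hv : v = 0
      · exact Or.inl hv
      · exact Or.inr (cover v hv)
    calc (1 : ENNReal) = μ Set.univ := (measure_univ).symm
      _ ≤ μ ({0} ∪ ((B1 \ P1) ∪ ((B2 \ P2) ∪ ((B3 \ P3) ∪ (B4 \ P4))))) :=
          measure_mono hcov
      _ ≤ μ {0} + μ ((B1 \ P1) ∪ ((B2 \ P2) ∪ ((B3 \ P3) ∪ (B4 \ P4)))) :=
          measure_union_le _ _
      _ = μ ((B1 \ P1) ∪ ((B2 \ P2) ∪ ((B3 \ P3) ∪ (B4 \ P4)))) := by rw [hμ0, zero_add]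
      _ ≤ μ (B1 \ P1) + μ ((B2 \ P2) ∪ ((B3 \ P3) ∪ (B4 \ P4))) := measure_union_le _ _
      _ ≤ μ (B1 \ P1) + (μ (B2 \ P2) + μ ((B3 \ P3) ∪ (B4 \ P4))) := by
          gcongr; exact measure_union_le _ _
      _ ≤ μ (B1 \ P1) + (μ (B2 \ P2) + (μ (B3 \ P3) + μ (B4 \ P4))) := by
          gcongr; exact measure_union_le _ _
  -- pass to reals
  set r1 := (μ (B1 \ P1)).toReal
  set r2 := (μ (B2 \ P2)).toReal
  set r3 := (μ (B3 \ P3)).toReal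
  set r4 := (μ (B4 \ P4)).toReal
  have hsum : (1 : ℝ) ≤ r1 + r2 + r3 + r4 := by
    have h4 : μ (B3 \ P3) + μ (B4 \ P4) ≠ ⊤ :=
      ENNReal.add_ne_top.mpr ⟨measure_ne_top μ _, measure_ne_top μ _⟩
    have h3 : μ (B2 \ P2) + (μ (B3 \ P3) + μ (B4 \ P4)) ≠ ⊤ :=
      ENNReal.add_ne_top.mpr ⟨measure_ne_top μ _, h4⟩
    have h2 : μ (B1 \ P1) + (μ (B2 \ P2) + (μ (B3 \ P3) + μ (B4 \ P4))) ≠ ⊤ :=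
      ENNReal.add_ne_top.mpr ⟨measure_ne_top μ _, h3⟩
    have hT := ENNReal.toReal_mono h2 key
    rw [ENNReal.toReal_one, ENNReal.toReal_add (measure_ne_top μ _) h3,
        ENNReal.toReal_add (measure_ne_top μ _) h4,
        ENNReal.toReal_add (measure_ne_top μ _) (measure_ne_top μ _)] at hT
    linarith
  have h0B1 : (0 : Fin 2 → ℝ) ∉ B1 := fun h => h.1 rfl
  have h0B2 : (0 : Fin 2 → ℝ) ∉ B2 := fun h => h.1 rfl
  have h0B3 : (0 : Fin 2 → ℝ) ∉ B3 := fun h => h.1 rfl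
  have h0B4 : (0 : Fin 2 → ℝ) ∉ B4 := fun h => by
    rcases h.1 with h' | h' <;> exact h' rfl
  have hbig : 1/4 ≤ r1 ∨ 1/4 ≤ r2 ∨ 1/4 ≤ r3 ∨ 1/4 ≤ r4 := by
    by_contra hcon
    push_neg at hcon
    obtain ⟨c1, c2, c3, c4⟩ := hcon
    linarith
  rcases hbig with hr | hr | hr | hr
  · exact ⟨B1, mB1, h0B1, !![1, 0; 1, 1], by simp,
      shalom_aux μ B1 P1 _ hpre1 mP1 hs1 hr⟩
  · exact ⟨B2, mB2, h0B2, !![1, 0; -1, 1], by simp,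
      shalom_aux μ B2 P2 _ hpre2 mP2 hs2 hr⟩
  · exact ⟨B3, mB3, h0B3, !![1, 1; 0, 1], by simp,
      shalom_aux μ B3 P3 _ hpre3 mP3 hs3 hr⟩
  · exact ⟨B4, mB4, h0B4, !![1, -1; 0, 1], by simp,
      shalom_aux μ B4 P4 _ hpre4 mP4 hs4 hr⟩
end

section
/- With the setup of the previous item (action of SL₂(ℤ) on 𝕋², F₁ = {L(±1), U(±1)}, F₂ = {±e₁, ±e₂}): for every ε > 0, if μ is a Borel probability measure on 𝕋² with ‖h·μ − μ‖ < ε/40 for all h ∈ F₂ (where (h·μ) denotes the measure with density χ ↦ e^{2πi⟨h,χ⟩} against μ, and the norm is the total variation of the complex measure h·μ − μ) and ‖g_*μ − μ‖ < ε/40 for all g ∈ F₁, then ‖μ − δ₀‖ < ε. That is, SL₂(ℤ) ↷ ℤ² has property (T⁺⁺) with constant 40. -/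
open MeasureTheory Matrix

noncomputable def tvDist {α : Type*} [MeasurableSpace α]
    (μ ν : Measure α) [IsFiniteMeasure μ] [IsFiniteMeasure ν] : ℝ :=
  ((μ.toSignedMeasure - ν.toSignedMeasure).totalVariation Set.univ).toReal

/-!
Write `x, y ∈ (-1/2, 1/2]` for the centred coordinates of `χ ∈ 𝕋²` and `δ = ε/40`. Since
`|e^{2πit} - 1| ≥ 1` for `|t| ≥ 1/6`, Markov's inequality applied to the characters `e₁, e₂`
puts mass `< 2δ` outside the box `D = {|x|, |y| < 1/6}`. On `D` the squared shears act linearly on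
`(x, y)`: if `σxy ≥ 0` with `σ = ±1` and `(x, y) ≠ 0`, then `U(σ)²(x, y) = (x + 2σy, y)` lies in the
flat part `|y| < |x|` of the same `σ`-sector, and `L(σ)²` maps it into the steep part. As each
shear moves any set's mass by less than `δ`, both parts of each sector carry at most `μ(Dᶜ) + 2δ`
inside `D`, whence `μ({0}ᶜ) < 18δ` and `‖μ - δ₀‖ ≤ 2 μ({0}ᶜ) < ε`.
-/

open Set Real

local notation "𝕋" => AddCircle (1 : ℝ)

section IntMatrixAct

variable {l m n M : Type*} [Fintype n] [AddCommGroup M]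

def intMatrixAct (g : Matrix m n ℤ) (x : n → M) : m → M := fun i => ∑ j, g i j • x j

lemma intMatrixAct_mul [Fintype m] (g : Matrix l m ℤ) (h : Matrix m n ℤ) (x : n → M) :
    intMatrixAct (g * h) x = intMatrixAct g (intMatrixAct h x) := by
  ext i
  simp only [intMatrixAct, Matrix.mul_apply, Finset.sum_smul, Finset.smul_sum, mul_smul]
  exact Finset.sum_comm

lemma intMatrixAct_one [DecidableEq n] (x : n → M) : intMatrixAct (1 : Matrix n n ℤ) x = x := by
  ext i
  simp [intMatrixAct, Matrix.one_apply]

lemma iterate_intMatrixAct [DecidableEq n] (g : Matrix n n ℤ) (k : ℕ) :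
    (intMatrixAct g : (n → M) → n → M)^[k] = intMatrixAct (g ^ k) := by
  induction k with
  | zero => funext x; simp [intMatrixAct_one]
  | succ k ih => funext x; rw [Function.iterate_succ_apply', ih, pow_succ', intMatrixAct_mul]

lemma intMatrixAct_fin_two (a b c d : ℤ) (x : Fin 2 → M) :
    intMatrixAct !![a, b; c, d] x = ![a • x 0 + b • x 1, c • x 0 + d • x 1] := by
  ext i
  fin_cases i <;> simp [intMatrixAct, Fin.sum_univ_two]

lemma measurable_intMatrixAct [MeasurableSpace M] [MeasurableAdd₂ M] [MeasurableConstSMul ℤ M]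
    (g : Matrix m n ℤ) :
    Measurable (intMatrixAct g : (n → M) → m → M) := by
  unfold intMatrixAct; fun_prop

end IntMatrixAct

section TotalVariation

variable {α : Type*} [MeasurableSpace α]

lemma abs_measureReal_sub_le_tvDist (μ ν : Measure α) [IsFiniteMeasure μ] [IsFiniteMeasure ν]
    {B : Set α} (hB : MeasurableSet B) : |μ.real B - ν.real B| ≤ tvDist μ ν := by
  have h := (μ.toSignedMeasure - ν.toSignedMeasure).norm_le_totalVariation B
  rw [Measure.toSignedMeasure_sub_apply hB, Real.norm_eq_abs] at h
  exact h.trans (measureReal_mono (subset_univ B))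

lemma tvDist_le_measureReal_univ {μ ν m : Measure α} [IsFiniteMeasure μ] [IsFiniteMeasure ν]
    [IsFiniteMeasure m] (h : ∀ E, MeasurableSet E → |μ.real E - ν.real E| ≤ m.real E) :
    tvDist μ ν ≤ m.real univ := by
  rw [tvDist, SignedMeasure.totalVariation_eq_variation]
  refine ENNReal.toReal_mono (measure_ne_top m univ) ?_
  refine VectorMeasure.variation_le_of_forall_enorm_le (fun E hE => ?_) univ
  rw [Measure.toSignedMeasure_sub_apply hE, Real.enorm_eq_ofReal_abs, ← ofReal_measureReal]
  exact ENNReal.ofReal_le_ofReal (h E hE)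

lemma tvDist_dirac_le [MeasurableSingletonClass α] (μ : Measure α) [IsProbabilityMeasure μ]
    (z : α) : tvDist μ (Measure.dirac z) ≤ 2 * μ.real {z}ᶜ := by
  calc tvDist μ (Measure.dirac z)
      ≤ (μ.restrict {z}ᶜ + (μ {z}ᶜ).toNNReal • Measure.dirac z).real univ := by
        refine tvDist_le_measureReal_univ fun E hE => ?_
        rw [measureReal_add_apply, measureReal_nnreal_smul_apply, measureReal_restrict_apply hE]
        by_cases hzE : z ∈ E
        · have hδ : (Measure.dirac z).real E = 1 := by simp [Measure.real, hE, hzE]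
          have : μ.real Eᶜ ≤ μ.real {z}ᶜ := measureReal_mono (compl_subset_compl.2 (by simpa))
          rw [probReal_compl_eq_one_sub hE] at this
          rw [hδ, abs_of_nonpos (by linarith [measureReal_le_one (μ := μ) (s := E)]), mul_one,
            ENNReal.coe_toNNReal_eq_toReal, ← measureReal_def]
          linarith [measureReal_nonneg (μ := μ) (s := E ∩ {z}ᶜ)]
        · have hδ : (Measure.dirac z).real E = 0 := by simp [Measure.real, hE, hzE]
          rw [hδ, inter_eq_left.2 (subset_compl_singleton_iff.2 hzE), sub_zero, mul_zero, add_zero,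
            abs_of_nonneg measureReal_nonneg]
    _ = 2 * μ.real {z}ᶜ := by simp [measureReal_def, two_mul, ENNReal.toReal_add]

lemma measureReal_preimage_le_add_tvDist (μ : Measure α) [IsFiniteMeasure μ] {T : α → α}
    (hT : Measurable T) {B : Set α} (hB : MeasurableSet B) :
    μ.real (T ⁻¹' B) ≤ μ.real B + tvDist (μ.map T) μ := by
  have h := abs_measureReal_sub_le_tvDist (μ.map T) μ hB
  rw [map_measureReal_apply hT hB] at h
  linarith [le_abs_self (μ.real (T ⁻¹' B) - μ.real B)]

lemma measureReal_preimage_iterate_le (μ : Measure α) [IsFiniteMeasure μ] {T : α → α}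
    (hT : Measurable T) {B : Set α} (hB : MeasurableSet B) (n : ℕ) :
    μ.real (T^[n] ⁻¹' B) ≤ μ.real B + n * tvDist (μ.map T) μ := by
  induction n with
  | zero => simp
  | succ n ih =>
    rw [Function.iterate_succ, Set.preimage_comp]
    have := measureReal_preimage_le_add_tvDist μ hT (hT.iterate n hB)
    push_cast
    linarith

lemma measureReal_inter_diff_le_of_mapsTo (μ : Measure α) [IsFiniteMeasure μ] {T : α → α}
    (hT : Measurable T) {S P D : Set α} (hS : MeasurableSet S) (hP : MeasurableSet P)
    {n : ℕ} (h : MapsTo T^[n] (S ∩ D) (S ∩ P)) :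
    μ.real ((S ∩ D) \ P) ≤ μ.real Dᶜ + n * tvDist (μ.map T) μ := by
  have hsplit : μ.real (S ∩ D ∩ P) + μ.real ((S ∩ D) \ P) = μ.real (S ∩ D) :=
    measureReal_inter_add_sdiff hP
  have hpush : μ.real (S ∩ D) ≤ μ.real (S ∩ P) + n * tvDist (μ.map T) μ :=
    (measureReal_mono h.subset_preimage).trans
      (measureReal_preimage_iterate_le μ hT (hS.inter hP) n)
  have hout : μ.real (S ∩ P) ≤ μ.real (S ∩ D ∩ P) + μ.real Dᶜ :=
    (measureReal_mono fun x hx => (em (x ∈ D)).imp (fun hxD => ⟨⟨hx.1, hxD⟩, hx.2⟩) id).trans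
      (measureReal_union_le _ _)
  linarith

lemma measureReal_inter_le_of_mapsTo (μ : Measure α) [IsFiniteMeasure μ] {T₁ T₂ : α → α}
    (hT₁ : Measurable T₁) (hT₂ : Measurable T₂) {S P D : Set α} (hS : MeasurableSet S)
    (hP : MeasurableSet P) {n : ℕ} (h₁ : MapsTo T₁^[n] (S ∩ D) (S ∩ P))
    (h₂ : MapsTo T₂^[n] (S ∩ D) (S ∩ Pᶜ)) :
    μ.real (S ∩ D) ≤ 2 * μ.real Dᶜ + n * (tvDist (μ.map T₁) μ + tvDist (μ.map T₂) μ) := by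
  have hout := measureReal_inter_diff_le_of_mapsTo μ hT₁ hS hP h₁
  have hin := measureReal_inter_diff_le_of_mapsTo μ hT₂ hS hP.compl h₂
  rw [sdiff_compl] at hin
  linarith [measureReal_inter_add_sdiff (μ := μ) (s := S ∩ D) hP]

end TotalVariation

noncomputable def centeredRep (χ : 𝕋) : ℝ := AddCircle.equivIoc 1 (-(1 / 2)) χ

lemma centeredRep_mem (χ : 𝕋) : centeredRep χ ∈ Ioc (-(1 / 2) : ℝ) (1 / 2) := by
  have := (AddCircle.equivIoc 1 (-(1 / 2)) χ).2
  norm_num at this ⊢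
  exact this

lemma coe_centeredRep (χ : 𝕋) : ((centeredRep χ : ℝ) : 𝕋) = χ :=
  (AddCircle.equivIoc 1 (-(1 / 2))).symm_apply_apply χ

lemma centeredRep_coe {x : ℝ} (hx : |x| < 1 / 2) : centeredRep x = x := by
  rw [centeredRep, AddCircle.equivIoc, QuotientAddGroup.equivIocMod_coe,
    toIocMod_eq_self zero_lt_one]
  constructor <;> linarith [abs_lt.1 hx]

lemma measurable_centeredRep : Measurable centeredRep :=
  measurable_subtype_coe.comp (AddCircle.measurableEquivIoc 1 (-(1 / 2))).measurable

lemma centeredRep_eq_zero_iff {χ : 𝕋} : centeredRep χ = 0 ↔ χ = 0 := by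
  constructor
  · intro h
    rw [← coe_centeredRep χ, h, QuotientAddGroup.mk_zero]
  · rintro rfl
    simpa using centeredRep_coe (x := 0) (by norm_num)

lemma one_le_norm_toCircle_sub_one {χ : 𝕋} (h : 1 / 6 ≤ |centeredRep χ|) :
    1 ≤ ‖(χ.toCircle : ℂ) - 1‖ := by
  set x := centeredRep χ
  have hx : |x| ≤ 1 / 2 := abs_le.2 ⟨(centeredRep_mem χ).1.le, (centeredRep_mem χ).2⟩
  have hsin : 1 / 2 ≤ Real.sin (π * |x|) := by
    rw [← Real.sin_pi_div_six]
    apply Real.sin_le_sin_of_le_of_le_pi_div_two <;> nlinarith [pi_pos]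
  have habs : |Real.sin (π * x)| = Real.sin (π * |x|) := by
    have hπx : |π * x| = π * |x| := by rw [abs_mul, abs_of_pos pi_pos]
    rw [abs_sin_eq_sin_abs_of_abs_le_pi (by rw [hπx]; nlinarith [pi_pos]), hπx]
  rw [← coe_centeredRep χ, AddCircle.toCircle_apply_mk, Circle.coe_exp, mul_comm,
    Complex.norm_exp_I_mul_ofReal_sub_one, norm_mul, Real.norm_eq_abs, Real.norm_eq_abs,
    show 2 * π / 1 * x / 2 = π * x by ring, habs]
  norm_num
  linarith

lemma centeredRep_add_zsmul {u v : 𝕋} (hu : |centeredRep u| < 1 / 6) (hv : |centeredRep v| < 1 / 6)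
    {a : ℤ} (ha : |a| ≤ 2) : centeredRep (u + a • v) = centeredRep u + a * centeredRep v := by
  have hsum : u + a • v = ((centeredRep u + a * centeredRep v : ℝ) : 𝕋) := by
    rw [AddCircle.coe_add, ← zsmul_eq_mul, AddCircle.coe_zsmul, coe_centeredRep, coe_centeredRep]
  have ha' : |(a : ℝ)| ≤ 2 := by exact_mod_cast ha
  rw [hsum, centeredRep_coe]
  calc |centeredRep u + a * centeredRep v| ≤ |centeredRep u| + |(a : ℝ)| * |centeredRep v| := by
        rw [← abs_mul]; exact abs_add_le _ _
    _ < 1 / 2 := by nlinarith [abs_nonneg (centeredRep v)]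

lemma measureReal_le_integral_norm_toCircle_sub_one {α : Type*} [MeasurableSpace α]
    (μ : Measure α) [IsFiniteMeasure μ] {f : α → 𝕋} (hf : Measurable f) :
    μ.real {a | 1 / 6 ≤ |centeredRep (f a)|} ≤ ∫ a, ‖((f a).toCircle : ℂ) - 1‖ ∂μ := by
  have hg : Measurable fun a => ‖((f a).toCircle : ℂ) - 1‖ :=
    (((continuous_subtype_val.comp AddCircle.continuous_toCircle).sub
      continuous_const).norm.measurable).comp hf
  have hbound : ∀ a, ‖‖((f a).toCircle : ℂ) - 1‖‖ ≤ 2 := fun a => by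
    rw [norm_norm]
    linarith [norm_sub_le ((f a).toCircle : ℂ) 1, Circle.norm_coe (f a).toCircle,
      norm_one (α := ℂ)]
  have hmarkov := mul_meas_ge_le_integral_of_nonneg (ae_of_all μ fun a => norm_nonneg _)
    ((integrable_const (2 : ℝ)).mono' hg.aestronglyMeasurable (ae_of_all μ hbound)) 1
  rw [one_mul] at hmarkov
  exact (measureReal_mono fun a ha => one_le_norm_toCircle_sub_one ha).trans hmarkov

lemma abs_lt_abs_add_two_mul {x y s : ℝ} (hs : s * s = 1) (hxy : x ≠ 0 ∨ y ≠ 0)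
    (hsign : 0 ≤ s * (x * y)) : |y| < |x + 2 * s * y| := by
  have hpos : 0 < x ^ 2 + 3 * y ^ 2 := by rcases hxy with h | h <;> positivity
  have hsy : (s * y) ^ 2 = y ^ 2 := by rw [mul_pow, sq s, hs, one_mul]
  exact sq_lt_sq.1 (by nlinarith)

def smallBox : Set (Fin 2 → 𝕋) := {χ | ∀ i, |centeredRep (χ i)| < 1 / 6}

def signSector (σ : ℤˣ) : Set (Fin 2 → 𝕋) :=
  {χ | χ ≠ 0 ∧ 0 ≤ ((σ : ℤ) : ℝ) * (centeredRep (χ 0) * centeredRep (χ 1))}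

def flatCone : Set (Fin 2 → 𝕋) := {χ | |centeredRep (χ 1)| ≤ |centeredRep (χ 0)|}

lemma measurable_centeredRep_apply (i : Fin 2) :
    Measurable fun χ : Fin 2 → 𝕋 => centeredRep (χ i) :=
  measurable_centeredRep.comp (measurable_pi_apply i)

lemma measurableSet_signSector (σ : ℤˣ) : MeasurableSet (signSector σ) :=
  (measurableSet_singleton 0).compl.inter <| measurableSet_le measurable_const <|
    measurable_const.mul <| (measurable_centeredRep_apply 0).mul (measurable_centeredRep_apply 1)

lemma measurableSet_flatCone : MeasurableSet flatCone :=
  measurableSet_le (measurable_centeredRep_apply 1).abs (measurable_centeredRep_apply 0).abs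

lemma centeredRep_ne_zero_or {χ : Fin 2 → 𝕋} (hχ : χ ≠ 0) :
    centeredRep (χ 0) ≠ 0 ∨ centeredRep (χ 1) ≠ 0 := by
  contrapose! hχ
  ext i
  fin_cases i <;> simp [centeredRep_eq_zero_iff.1 hχ.1, centeredRep_eq_zero_iff.1 hχ.2]

lemma ne_zero_of_abs_centeredRep_lt {ψ : Fin 2 → 𝕋} {i j : Fin 2}
    (h : |centeredRep (ψ i)| < |centeredRep (ψ j)|) : ψ ≠ 0 := by
  rintro rfl
  simp [centeredRep_eq_zero_iff.2] at h

lemma abs_two_mul_units_le (σ : ℤˣ) : |2 * (σ : ℤ)| ≤ 2 := by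
  rcases Int.units_eq_one_or σ with rfl | rfl <;> norm_num

lemma units_mul_self_real (σ : ℤˣ) : ((σ : ℤ) : ℝ) * (σ : ℤ) = 1 := by
  exact_mod_cast Int.units_coe_mul_self σ

lemma mapsTo_upperShear_sq (σ : ℤˣ) :
    MapsTo (intMatrixAct !![1, (σ : ℤ); 0, 1])^[2] (signSector σ ∩ smallBox)
      (signSector σ ∩ flatCone) := by
  rintro χ ⟨⟨hχ, hsign⟩, hbox⟩
  have himage : (intMatrixAct !![1, (σ : ℤ); 0, 1])^[2] χ = ![χ 0 + (2 * σ : ℤ) • χ 1, χ 1] := by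
    rw [iterate_intMatrixAct, sq, Matrix.mul_fin_two, intMatrixAct_fin_two]
    simp [two_mul, add_smul]
  have hrep : centeredRep (χ 0 + (2 * σ : ℤ) • χ 1)
      = centeredRep (χ 0) + 2 * (σ : ℤ) * centeredRep (χ 1) := by
    rw [centeredRep_add_zsmul (hbox 0) (hbox 1) (abs_two_mul_units_le σ)]
    push_cast; ring
  have hlt := abs_lt_abs_add_two_mul (units_mul_self_real σ) (centeredRep_ne_zero_or hχ) hsign
  rw [← hrep] at hlt
  rw [himage]
  refine ⟨⟨ne_zero_of_abs_centeredRep_lt (i := 1) (j := 0) (by simpa using hlt), ?_⟩,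
    by simpa [flatCone] using hlt.le⟩
  simp only [Matrix.cons_val_zero, Matrix.cons_val_one, hrep]
  nlinarith [units_mul_self_real σ, sq_nonneg (centeredRep (χ 1))]

lemma mapsTo_lowerShear_sq (σ : ℤˣ) :
    MapsTo (intMatrixAct !![1, 0; (σ : ℤ), 1])^[2] (signSector σ ∩ smallBox)
      (signSector σ ∩ flatConeᶜ) := by
  rintro χ ⟨⟨hχ, hsign⟩, hbox⟩
  have himage : (intMatrixAct !![1, 0; (σ : ℤ), 1])^[2] χ = ![χ 0, χ 1 + (2 * σ : ℤ) • χ 0] := by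
    rw [iterate_intMatrixAct, sq, Matrix.mul_fin_two, intMatrixAct_fin_two]
    simp [two_mul, add_smul, add_comm]
  have hrep : centeredRep (χ 1 + (2 * σ : ℤ) • χ 0)
      = centeredRep (χ 1) + 2 * (σ : ℤ) * centeredRep (χ 0) := by
    rw [centeredRep_add_zsmul (hbox 1) (hbox 0) (abs_two_mul_units_le σ)]
    push_cast; ring
  have hlt := abs_lt_abs_add_two_mul (units_mul_self_real σ) (centeredRep_ne_zero_or hχ).symm
    (by rwa [mul_comm (centeredRep (χ 1))])
  rw [← hrep] at hlt
  rw [himage]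
  refine ⟨⟨ne_zero_of_abs_centeredRep_lt (i := 0) (j := 1) (by simpa using hlt), ?_⟩,
    by simpa [flatCone] using hlt⟩
  simp only [Matrix.cons_val_zero, Matrix.cons_val_one, hrep]
  nlinarith [units_mul_self_real σ, sq_nonneg (centeredRep (χ 0))]

lemma compl_zero_subset :
    ({0}ᶜ : Set (Fin 2 → 𝕋)) ⊆
      smallBoxᶜ ∪ signSector 1 ∩ smallBox ∪ signSector (-1) ∩ smallBox := by
  intro χ hχ
  by_cases hbox : χ ∈ smallBox
  · rcases le_total 0 (centeredRep (χ 0) * centeredRep (χ 1)) with h | h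
    · exact Or.inl (Or.inr ⟨⟨hχ, by simpa using h⟩, hbox⟩)
    · exact Or.inr ⟨⟨hχ, by simpa using h⟩, hbox⟩
  · exact Or.inl (Or.inl hbox)

lemma measureReal_compl_smallBox_le (μ : Measure (Fin 2 → 𝕋)) [IsFiniteMeasure μ] :
    μ.real smallBoxᶜ ≤ ∑ i, ∫ χ, ‖((χ i).toCircle : ℂ) - 1‖ ∂μ := by
  have hcompl : smallBoxᶜ = ⋃ i, {χ : Fin 2 → 𝕋 | 1 / 6 ≤ |centeredRep (χ i)|} := by
    ext χ
    simp only [smallBox, mem_compl_iff, mem_ofPred_eq, mem_iUnion, not_forall, not_lt]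
  rw [hcompl]
  exact (measureReal_iUnion_fintype_le _).trans <| Finset.sum_le_sum fun i _ =>
    measureReal_le_integral_norm_toCircle_sub_one μ (measurable_pi_apply i)

theorem SL2_Z2_property_Tpp_general (ε : ℝ)
    (μ : Measure (Fin 2 → AddCircle (1 : ℝ))) [IsProbabilityMeasure μ]
    (hchar : ∀ h ∈ ({![1, 0], ![-1, 0], ![0, 1], ![0, -1]} : Set (Fin 2 → ℤ)),
      (∫ χ, ‖(((∑ i, h i • χ i : AddCircle (1 : ℝ)).toCircle : ℂ) - 1)‖ ∂μ) < ε / 40)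
    (hpush : ∀ g ∈ ({!![1, 0; 1, 1], !![1, 0; -1, 1], !![1, 1; 0, 1],
        !![1, -1; 0, 1]} : Set (Matrix (Fin 2) (Fin 2) ℤ)),
      tvDist (μ.map fun x i => ∑ j, g i j • x j) μ < ε / 40) :
    tvDist μ (Measure.dirac (fun _ => (0 : AddCircle (1 : ℝ)))) < ε := by
  have hbox : μ.real smallBoxᶜ < 2 * (ε / 40) := by
    have h0 := hchar ![1, 0] (by simp)
    have h1 := hchar ![0, 1] (by simp)
    simp only [Fin.sum_univ_two, cons_val_zero, cons_val_one, cons_val_fin_one, one_smul,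
      zero_smul, add_zero, zero_add] at h0 h1
    have := measureReal_compl_smallBox_le μ
    rw [Fin.sum_univ_two] at this
    linarith
  have hsector (σ : ℤˣ) :
      μ.real (signSector σ ∩ smallBox) ≤ 2 * μ.real smallBoxᶜ + 4 * (ε / 40) := by
    have hU : tvDist (μ.map (intMatrixAct !![1, (σ : ℤ); 0, 1])) μ < ε / 40 :=
      hpush _ (by rcases Int.units_eq_one_or σ with rfl | rfl <;> simp)
    have hL : tvDist (μ.map (intMatrixAct !![1, 0; (σ : ℤ), 1])) μ < ε / 40 :=
      hpush _ (by rcases Int.units_eq_one_or σ with rfl | rfl <;> simp)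
    have := measureReal_inter_le_of_mapsTo μ (measurable_intMatrixAct _)
      (measurable_intMatrixAct _) (measurableSet_signSector σ) measurableSet_flatCone
      (mapsTo_upperShear_sq σ) (mapsTo_lowerShear_sq σ)
    push_cast at this
    linarith
  have hzero : μ.real {0}ᶜ < 18 * (ε / 40) := by
    have hcover : μ.real {0}ᶜ ≤ μ.real smallBoxᶜ + μ.real (signSector 1 ∩ smallBox)
        + μ.real (signSector (-1) ∩ smallBox) :=
      (measureReal_mono compl_zero_subset).trans <|
        (measureReal_union_le _ _).trans (by gcongr; exact measureReal_union_le _ _)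
    linarith [hsector 1, hsector (-1)]
  calc tvDist μ (Measure.dirac 0) ≤ 2 * μ.real {0}ᶜ := tvDist_dirac_le μ 0
    _ < ε := by linarith [measureReal_nonneg (μ := μ) (s := smallBoxᶜ)]

/-- Property (T⁺⁺) for `SL₂(ℤ) ↷ ℤ²` with constant `40`: if a probability
measure `μ` on `𝕋²` satisfies `‖h·μ − μ‖ < ε/40` for `h ∈ F₂ = {±e₁, ±e₂}`
(the total variation of the complex measure with density `e^{2πi⟨h,·⟩} − 1`,
i.e. `∫ |e^{2πi⟨h,χ⟩} − 1| dμ(χ)`) and `‖g_*μ − μ‖ < ε/40` for the elementary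
matrices `g ∈ F₁ = {L(±1), U(±1)}`, then `‖μ − δ₀‖ < ε`. -/
theorem SL2_Z2_property_Tpp (ε : ℝ) (hε : 0 < ε)
    (μ : Measure (Fin 2 → AddCircle (1 : ℝ))) [IsProbabilityMeasure μ]
    (hchar : ∀ h ∈ ({![1, 0], ![-1, 0], ![0, 1], ![0, -1]} : Set (Fin 2 → ℤ)),
      (∫ χ, ‖(((∑ i, h i • χ i : AddCircle (1 : ℝ)).toCircle : ℂ) - 1)‖ ∂μ) < ε / 40)
    (hpush : ∀ g ∈ ({!![1, 0; 1, 1], !![1, 0; -1, 1], !![1, 1; 0, 1],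
        !![1, -1; 0, 1]} : Set (Matrix (Fin 2) (Fin 2) ℤ)),
      tvDist (μ.map fun x i => ∑ j, g i j • x j) μ < ε / 40) :
    tvDist μ (Measure.dirac (fun _ => (0 : AddCircle (1 : ℝ)))) < ε :=
  SL2_Z2_property_Tpp_general ε μ hchar hpush
end
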